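/- arXiv:2105.06513 — 7 statements merged into one kernel-verified Lean document; each statement's English description precedes it below -/
import Mathlib

section
/- Let g ≥ 2 and b > 1 be integers with gcd(b,g) = 1, and let k ≥ 1. Set h = (g^{ord_g(b^k)} − 1)/b^k (an integer, since g^{ord_g(b^k)} ≡ 1 (mod b^k)) and d = gcd(h, b). Then ord_g(b^{k+1}) = (b/d)·ord_g(b^k). -/
/-!
Let `n = ord_g(b^k)`, so that `g^n = 1 + h b^k`. Modulo `b^(k+1)` the element `ε = h b^k`
satisfies `ε² = 0` because `k ≥ 1`, hence `(1 + ε)^s = 1 + s ε`: the multiplicative order of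
`g^n` is the additive order of `ε`, which is `b / gcd(h, b)`. As `n` divides `ord_g(b^(k+1))`,
the order of `g^n` is also `ord_g(b^(k+1)) / n`.
-/

/-- `ordg g m = min {n ≥ 1 : g^n ≡ 1 (mod m)}`, the multiplicative order of `g` modulo `m`. -/
noncomputable def ordg (g m : ℕ) : ℕ := sInf {n : ℕ | 0 < n ∧ g ^ n ≡ 1 [MOD m]}

theorem orderOf_eq_sInf {G : Type*} [Monoid G] (x : G) :
    orderOf x = sInf {n : ℕ | 0 < n ∧ x ^ n = 1} := by
  rcases Set.eq_empty_or_nonempty {n : ℕ | 0 < n ∧ x ^ n = 1} with hS | hS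
  · rw [hS, Nat.sInf_empty, orderOf_eq_zero_iff']
    exact fun n hn hxn => hS.subset ⟨hn, hxn⟩
  · obtain ⟨hpos, hpow⟩ := Nat.sInf_mem hS
    exact (orderOf_eq_iff hpos).mpr
      ⟨hpow, fun m hm hm0 hxm => Nat.notMem_of_lt_sInf hm ⟨hm0, hxm⟩⟩

theorem one_add_pow_of_mul_self_eq_zero {R : Type*} [Semiring R] {ε : R} (hε : ε * ε = 0)
    (s : ℕ) : (1 + ε) ^ s = 1 + s • ε := by
  induction s with
  | zero => simp
  | succ s ih =>
    rw [pow_succ, ih, add_mul, one_mul, smul_mul_assoc, mul_add, mul_one, hε, add_zero,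
      succ_nsmul, add_assoc, add_comm ε]

theorem orderOf_one_add_of_mul_self_eq_zero {R : Type*} [Ring R] {ε : R} (hε : ε * ε = 0) :
    orderOf (1 + ε) = addOrderOf ε :=
  Nat.dvd_antisymm
    (orderOf_dvd_of_pow_eq_one (by
      rw [one_add_pow_of_mul_self_eq_zero hε, addOrderOf_nsmul_eq_zero, add_zero]))
    (addOrderOf_dvd_of_nsmul_eq_zero (by
      simpa [one_add_pow_of_mul_self_eq_zero hε] using pow_orderOf_eq_one (1 + ε)))

theorem Nat.ModEq.eq_one_add_div_mul {a m : ℕ} (hm : m ≠ 1) (h : a ≡ 1 [MOD m]) :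
    a = 1 + (a - 1) / m * m := by
  have ha : a ≠ 0 := by
    rintro rfl
    exact hm (Nat.dvd_one.mp (Nat.modEq_zero_iff_dvd.mp h.symm))
  rw [Nat.div_mul_cancel ((Nat.modEq_iff_dvd' (Nat.one_le_iff_ne_zero.mpr ha)).mp h.symm)]
  omega

namespace ZMod

theorem orderOf_natCast_pos {g m : ℕ} [NeZero m] (h : g.Coprime m) :
    0 < orderOf (g : ZMod m) := by
  rw [← coe_unitOfCoprime g h, orderOf_units]
  exact orderOf_pos _

theorem orderOf_natCast_dvd_of_dvd (g : ℕ) {m n : ℕ} (hmn : m ∣ n) :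
    orderOf (g : ZMod m) ∣ orderOf (g : ZMod n) := by
  simpa using orderOf_map_dvd (castHom hmn (ZMod m)).toMonoidHom (g : ZMod n)

theorem addOrderOf_natCast_mul_pow {b : ℕ} (hb : b ≠ 0) (h k : ℕ) :
    addOrderOf ((h * b ^ k : ℕ) : ZMod (b ^ (k + 1))) = b / Nat.gcd h b := by
  rw [addOrderOf_coe _ (pow_ne_zero _ hb), pow_succ', Nat.gcd_mul_right, Nat.gcd_comm,
    Nat.mul_div_mul_right _ _ (pow_pos (Nat.pos_of_ne_zero hb) k)]

theorem natCast_mul_pow_mul_self_eq_zero (b h : ℕ) {k : ℕ} (hk : 1 ≤ k) :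
    ((h * b ^ k : ℕ) : ZMod (b ^ (k + 1))) * ((h * b ^ k : ℕ) : ZMod (b ^ (k + 1))) = 0 := by
  rw [← Nat.cast_mul, natCast_eq_zero_iff]
  have hb2k : b ^ (k + 1) ∣ b ^ k * b ^ k := by
    rw [← pow_add]
    exact pow_dvd_pow b (by omega)
  exact hb2k.trans ⟨h * h, by ring⟩

end ZMod

theorem ordg_eq_orderOf (g m : ℕ) : ordg g m = orderOf (g : ZMod m) := by
  simp only [ordg, orderOf_eq_sInf, ← ZMod.natCast_eq_natCast_iff, Nat.cast_pow, Nat.cast_one]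

theorem ord_succ_pow_general (g b k : ℕ) (hb : 1 < b) (hbg : Nat.gcd b g = 1)
    (hk : 1 ≤ k) :
    ordg g (b ^ (k + 1))
      = (b / Nat.gcd ((g ^ ordg g (b ^ k) - 1) / b ^ k) b) * ordg g (b ^ k) := by
  have : NeZero (b ^ k) := ⟨pow_ne_zero k (by omega)⟩
  rw [ordg_eq_orderOf, ordg_eq_orderOf]
  set n := orderOf (g : ZMod (b ^ k))
  set h := (g ^ n - 1) / b ^ k
  have hn : n ≠ 0 := (ZMod.orderOf_natCast_pos ((Nat.coprime_comm.mp hbg).pow_right k)).ne'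
  have hnN : n ∣ orderOf (g : ZMod (b ^ (k + 1))) :=
    ZMod.orderOf_natCast_dvd_of_dvd g (pow_dvd_pow b k.le_succ)
  have hpow : g ^ n = 1 + h * b ^ k := by
    refine Nat.ModEq.eq_one_add_div_mul (Nat.one_lt_pow (by omega) hb).ne' ?_
    rw [← ZMod.natCast_eq_natCast_iff, Nat.cast_pow, pow_orderOf_eq_one, Nat.cast_one]
  have hord : orderOf ((g : ZMod (b ^ (k + 1))) ^ n) = b / Nat.gcd h b := by
    rw [← Nat.cast_pow, hpow, Nat.cast_add, Nat.cast_one,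
      orderOf_one_add_of_mul_self_eq_zero (ZMod.natCast_mul_pow_mul_self_eq_zero b h hk),
      ZMod.addOrderOf_natCast_mul_pow (by omega)]
  rw [← hord, orderOf_pow_of_dvd hn hnN, Nat.div_mul_cancel hnN]

/-- For `g ≥ 2`, `b > 1` with `gcd(b,g) = 1` and `k ≥ 1`, with
`h = (g^{ord_g(b^k)} − 1)/b^k` and `d = gcd(h,b)`, one has
`ord_g(b^{k+1}) = (b/d)·ord_g(b^k)`. -/
theorem ord_succ_pow (g b k : ℕ) (hg : 2 ≤ g) (hb : 1 < b) (hbg : Nat.gcd b g = 1)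
    (hk : 1 ≤ k) :
    ordg g (b ^ (k + 1))
      = (b / Nat.gcd ((g ^ ordg g (b ^ k) - 1) / b ^ k) b) * ordg g (b ^ k) :=
  ord_succ_pow_general g b k hb hbg hk
end

section
/- Let g ≥ 2 and b > 1 be integers with gcd(b,g) = 1, let a be a positive integer with gcd(a,b) = 1 and a < b^k, and let k ≥ c_g(b). Then for every i with 0 ≤ i < ord_g(b^k) and every m ∈ {0,…,b−1} there is a unique n ∈ {0,…,b−1} such that (a·g^{i + m·ord_g(b^k)}) mod b^{k+1} = ((a·g^i) mod b^k) + n·b^k; moreover, for each fixed i, the resulting map m ↦ n is a bijection of {0,…,b−1} onto itself. -/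
/-- `cg g b` is the least `c ≥ 1` such that `ord_g(b^{c+t}) = b^t·ord_g(b^c)` for all `t ≥ 1`. -/
noncomputable def cg (g b : ℕ) : ℕ :=
  sInf {c : ℕ | 0 < c ∧ ∀ t : ℕ, 0 < t → ordg g (b ^ (c + t)) = b ^ t * ordg g (b ^ c)}

theorem ordg_dvd_iff {g m n : ℕ} : ordg g m ∣ n ↔ g ^ n ≡ 1 [MOD m] := by
  rw [ordg_eq_orderOf, orderOf_dvd_iff_pow_eq_one, ← ZMod.natCast_eq_natCast_iff]
  push_cast
  rfl

theorem ordg_eq_of_dvd_iff {g m d : ℕ} (h : ∀ n, d ∣ n ↔ g ^ n ≡ 1 [MOD m]) :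
    ordg g m = d :=
  Nat.dvd_antisymm (ordg_dvd_iff.mpr ((h d).mp dvd_rfl)) ((h _).mpr (ordg_dvd_iff.mp dvd_rfl))

theorem ordg_pos {g m : ℕ} (hm : 0 < m) (h : g.Coprime m) : 0 < ordg g m :=
  Nat.pos_of_dvd_of_pos (ordg_dvd_iff.mpr (Nat.ModEq.pow_totient h)) (Nat.totient_pos.mpr hm)

theorem ordg_eq_mul_ordg_pow {g m N : ℕ} (hN : N ≠ 0) (h : N ∣ ordg g m) :
    ordg g m = N * ordg (g ^ N) m := by
  rw [ordg_eq_orderOf] at h ⊢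
  rw [ordg_eq_orderOf, Nat.cast_pow, orderOf_pow_of_dvd hN h, Nat.mul_div_cancel' h]

theorem emultiplicity_pow_sub_one {p x : ℕ} (hp : p.Prime) (hx : 1 ≤ x) (hpx : p ∣ x - 1)
    (h2 : p = 2 → 4 ∣ x - 1) (n : ℕ) :
    emultiplicity p (x ^ n - 1) = emultiplicity p (x - 1) + emultiplicity p n := by
  have hpx' : ¬p ∣ x := fun h =>
    hp.not_dvd_one (by simpa [Nat.sub_sub_self hx] using Nat.dvd_sub h hpx)
  rcases hp.eq_two_or_odd' with rfl | hodd
  · have h4 := Int.natCast_dvd_natCast.mpr (h2 rfl)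
    push_cast [Nat.cast_sub hx] at h4
    have := Int.two_pow_sub_pow' (y := 1) n h4 (by exact_mod_cast hpx')
    rw [← Int.natCast_emultiplicity, ← Int.natCast_emultiplicity, ← Int.natCast_emultiplicity]
    push_cast [Nat.cast_sub hx, Nat.cast_sub (Nat.one_le_pow _ _ hx)]
    simpa using this
  · simpa using Nat.emultiplicity_pow_sub_pow hp hodd (y := 1) hpx hpx' n

theorem factorization_pow_sub_one {p x n : ℕ} (hp : p.Prime) (hx : 1 < x) (hpx : p ∣ x - 1)
    (h2 : p = 2 → 4 ∣ x - 1) (hn : n ≠ 0) :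
    (x ^ n - 1).factorization p = (x - 1).factorization p + n.factorization p := by
  have := Fact.mk hp
  have hxn : x ^ n - 1 ≠ 0 := Nat.sub_ne_zero_of_lt (Nat.one_lt_pow hn hx)
  simp only [Nat.factorization_def _ hp, ← Nat.cast_inj (R := ℕ∞), Nat.cast_add,
    padicValNat_eq_emultiplicity hxn, padicValNat_eq_emultiplicity (Nat.sub_ne_zero_of_lt hx),
    padicValNat_eq_emultiplicity hn]
  exact emultiplicity_pow_sub_one hp hx.le hpx h2 n

theorem ordg_eq_div_gcd {x m : ℕ} (hx : 1 < x) (hm : m ≠ 0)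
    (hpm : ∀ p ∈ m.primeFactors, p ∣ x - 1 ∧ (p = 2 → 4 ∣ x - 1)) :
    ordg x m = m / m.gcd (x - 1) := by
  refine ordg_eq_of_dvd_iff fun n => ?_
  rcases eq_or_ne n 0 with rfl | hn
  · simp [Nat.ModEq.refl]
  have hx1 : x - 1 ≠ 0 := Nat.sub_ne_zero_of_lt hx
  have hq : m / m.gcd (x - 1) ≠ 0 :=
    (Nat.div_ne_zero_iff_of_dvd (Nat.gcd_dvd_left _ _)).mpr ⟨hm, Nat.gcd_ne_zero_left hm⟩
  rw [Nat.ModEq.comm, Nat.modEq_iff_dvd' (Nat.one_le_pow _ _ (by omega)),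
    ← Nat.factorization_le_iff_dvd hq hn,
    ← Nat.factorization_le_iff_dvd hm (Nat.sub_ne_zero_of_lt (Nat.one_lt_pow hn hx)),
    Nat.factorization_div (Nat.gcd_dvd_left _ _), Nat.factorization_gcd hm hx1,
    Finsupp.le_def, Finsupp.le_def]
  refine forall_congr' fun p => ?_
  simp only [Finsupp.coe_tsub, Finsupp.inf_apply, Pi.sub_apply]
  by_cases hp : p ∈ m.primeFactors
  · rw [factorization_pow_sub_one (Nat.prime_of_mem_primeFactors hp) hx (hpm p hp).1 (hpm p hp).2
      hn]
    omega
  · simp [Finsupp.notMem_support_iff.mp (by rwa [Nat.support_factorization])]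

theorem gcd_pow_succ_eq_gcd_pow {b n c : ℕ} (hb : b ≠ 0) (hn : n ≠ 0) (hc : n ≤ c) :
    (b ^ (c + 1)).gcd n = (b ^ c).gcd n := by
  refine Nat.eq_of_factorization_eq (Nat.gcd_ne_zero_right hn) (Nat.gcd_ne_zero_right hn)
    fun p => ?_
  simp only [Nat.factorization_gcd (pow_ne_zero _ hb) hn, Finsupp.inf_apply,
    Nat.factorization_pow, Finsupp.smul_apply, smul_eq_mul]
  have hlt := Nat.factorization_lt p hn
  rcases Nat.eq_zero_or_pos (b.factorization p) with h | h
  · simp [h]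
  · rw [min_eq_right (by nlinarith), min_eq_right (by nlinarith)]

theorem ordg_pow_eq_mul_div_gcd {g b c : ℕ} (hg : 1 < g) (hgb : g.Coprime b) (hc : 2 ≤ c) :
    ordg g (b ^ c) = ordg g (b ^ 2) * (b ^ c / (b ^ c).gcd (g ^ ordg g (b ^ 2) - 1)) := by
  have hb : b ≠ 0 := by rintro rfl; simp_all
  set N := ordg g (b ^ 2)
  have hN : N ≠ 0 := (ordg_pos (by positivity) (hgb.pow_right 2)).ne'
  have hsq : b ^ 2 ∣ g ^ N - 1 :=
    (Nat.modEq_iff_dvd' (Nat.one_le_pow _ _ (by omega))).mp (ordg_dvd_iff.mp dvd_rfl).symm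
  have hNc : N ∣ ordg g (b ^ c) :=
    ordg_dvd_iff.mpr ((ordg_dvd_iff.mp dvd_rfl).of_dvd (pow_dvd_pow b hc))
  rw [ordg_eq_mul_ordg_pow hN hNc]
  congr 1
  refine ordg_eq_div_gcd (Nat.one_lt_pow hN hg) (pow_ne_zero _ hb) fun p hp => ?_
  have hpb : p ∣ b :=
    Nat.dvd_of_mem_primeFactors (by rwa [Nat.primeFactors_pow b (by omega)] at hp)
  have hp2 : p ^ 2 ∣ g ^ N - 1 := (pow_dvd_pow_of_dvd hpb 2).trans hsq
  exact ⟨(dvd_pow_self p two_ne_zero).trans hp2, by rintro rfl; exact hp2⟩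

theorem exists_forall_ge_ordg_pow_succ_eq {g b : ℕ} (hg : 1 < g) (hgb : g.Coprime b) :
    ∃ C, ∀ c ≥ C, ordg g (b ^ (c + 1)) = b * ordg g (b ^ c) := by
  have hb : b ≠ 0 := by rintro rfl; simp_all
  set N := ordg g (b ^ 2)
  have hN : N ≠ 0 := (ordg_pos (by positivity) (hgb.pow_right 2)).ne'
  have hgN : g ^ N - 1 ≠ 0 := Nat.sub_ne_zero_of_lt (Nat.one_lt_pow hN hg)
  refine ⟨max 2 (g ^ N - 1), fun c hc => ?_⟩
  have hgcd := gcd_pow_succ_eq_gcd_pow hb hgN (le_of_max_le_right hc)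
  rw [ordg_pow_eq_mul_div_gcd (c := c + 1) hg hgb (by omega),
    ordg_pow_eq_mul_div_gcd (c := c) hg hgb (by omega), hgcd,
    pow_succ' b c, Nat.mul_div_assoc _ (Nat.gcd_dvd_left (b ^ c) _)]
  ring

theorem ordg_pow_add_of_forall_ge {g b C : ℕ}
    (h : ∀ c ≥ C, ordg g (b ^ (c + 1)) = b * ordg g (b ^ c)) (t : ℕ) :
    ordg g (b ^ (C + t)) = b ^ t * ordg g (b ^ C) := by
  induction t with
  | zero => simp
  | succ t ih => rw [← add_assoc, h _ (by omega), ih, pow_succ']; ring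

theorem cg_spec {g b : ℕ} (hg : 1 < g) (hgb : g.Coprime b) :
    0 < cg g b ∧ ∀ t, 0 < t → ordg g (b ^ (cg g b + t)) = b ^ t * ordg g (b ^ cg g b) := by
  obtain ⟨C, hC⟩ := exists_forall_ge_ordg_pow_succ_eq hg hgb
  exact Nat.sInf_mem
    (s := {c | 0 < c ∧ ∀ t, 0 < t → ordg g (b ^ (c + t)) = b ^ t * ordg g (b ^ c)})
    ⟨max C 1, by omega, fun t _ =>
      ordg_pow_add_of_forall_ge (fun c hc => hC c (le_of_max_le_left hc)) t⟩

theorem ordg_pow_succ_of_cg_le {g b k : ℕ} (hg : 1 < g) (hgb : g.Coprime b) (hk : cg g b ≤ k) :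
    ordg g (b ^ (k + 1)) = b * ordg g (b ^ k) := by
  obtain ⟨-, hcg⟩ := cg_spec hg hgb
  have key : ∀ t, ordg g (b ^ (cg g b + t)) = b ^ t * ordg g (b ^ cg g b) := fun t => by
    rcases Nat.eq_zero_or_pos t with rfl | ht
    · simp
    · exact hcg t ht
  obtain ⟨t, rfl⟩ := Nat.exists_eq_add_of_le hk
  rw [add_assoc, key, key, pow_succ']
  ring

theorem pow_add_mul_ordg_modEq (g n i m : ℕ) : g ^ (i + m * ordg g n) ≡ g ^ i [MOD n] := by
  rw [pow_add]
  simpa using (ordg_dvd_iff.mp (dvd_mul_left (ordg g n) m)).mul_left (g ^ i)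

theorem mod_pow_succ_of_modEq {x y b k : ℕ} (h : x ≡ y [MOD b ^ k]) :
    x % b ^ (k + 1) = y % b ^ k + x / b ^ k % b * b ^ k := by
  rw [Nat.mod_pow_succ, h, mul_comm]

theorem injOn_mul_pow_add_mul_mod {a g b d M : ℕ} (ha : a.Coprime M) (hg : g.Coprime M)
    (hd : d ≠ 0) (hM : ordg g M = b * d) (i : ℕ) :
    Set.InjOn (fun m => a * g ^ (i + m * d) % M) (Set.Iio b) := by
  intro m₁ hm₁ m₂ hm₂ h
  have hunit : IsUnit ((a * g ^ i : ℕ) : ZMod M) :=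
    (ZMod.isUnit_iff_coprime _ _).mpr (Nat.Coprime.mul_left ha (hg.pow_left i))
  have hgM : orderOf (g : ZMod M) = b * d := by rw [← ordg_eq_orderOf, hM]
  have hx : orderOf ((g : ZMod M) ^ d) = b := by
    rw [orderOf_pow_of_dvd hd (hgM ▸ dvd_mul_left d b), hgM,
      Nat.mul_div_cancel _ (Nat.pos_of_ne_zero hd)]
  have h' := congrArg (Nat.cast : ℕ → ZMod M) h
  simp only [ZMod.natCast_mod, Nat.cast_mul, Nat.cast_pow, pow_add, pow_mul'] at h'
  rw [← mul_assoc, ← mul_assoc] at h'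
  refine pow_injOn_Iio_orderOf (x := (g : ZMod M) ^ d) (by rwa [hx]) (by rwa [hx]) ?_
  exact hunit.mul_left_cancel (by simpa using h')

theorem remainders_next_level_general (g b a k : ℕ) (hg : 2 ≤ g) (hb : 1 < b)
    (hbg : Nat.gcd b g = 1) (hab : Nat.gcd a b = 1)
    (hk : cg g b ≤ k) :
    ∀ i : ℕ, i < ordg g (b ^ k) →
      (∀ m : ℕ, m < b → ∃! n : ℕ, n < b ∧
        a * g ^ (i + m * ordg g (b ^ k)) % b ^ (k + 1) = a * g ^ i % b ^ k + n * b ^ k) ∧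
      (∀ n : ℕ, n < b → ∃! m : ℕ, m < b ∧
        a * g ^ (i + m * ordg g (b ^ k)) % b ^ (k + 1) = a * g ^ i % b ^ k + n * b ^ k) := by
  intro i _
  have hgb : g.Coprime b := Nat.Coprime.symm hbg
  set d := ordg g (b ^ k)
  set digit : ℕ → ℕ := fun m => a * g ^ (i + m * d) / b ^ k % b
  have hexpand (m n : ℕ) :
      a * g ^ (i + m * d) % b ^ (k + 1) = a * g ^ i % b ^ k + n * b ^ k ↔ n = digit m := by
    rw [mod_pow_succ_of_modEq ((pow_add_mul_ordg_modEq g _ i m).mul_left a), add_right_inj,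
      Nat.mul_left_inj (by positivity), eq_comm]
  have hmaps : Set.MapsTo digit (Set.Iio b) (Set.Iio b) := fun m _ => Nat.mod_lt _ (by omega)
  have hinj : Set.InjOn digit (Set.Iio b) := fun m₁ hm₁ m₂ hm₂ h =>
    injOn_mul_pow_add_mul_mod (Nat.Coprime.pow_right (k + 1) hab) (hgb.pow_right (k + 1))
      (ordg_pos (by positivity) (hgb.pow_right k)).ne' (ordg_pow_succ_of_cg_le (by omega) hgb hk)
      i hm₁ hm₂ (((hexpand m₁ _).mpr rfl).trans ((hexpand m₂ _).mpr h).symm)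
  have hbij := ((Set.finite_Iio b).injOn_iff_bijOn_of_mapsTo hmaps).mp hinj
  simp only [hexpand]
  refine ⟨fun m hm => ⟨digit m, ⟨hmaps hm, rfl⟩, fun n hn => hn.2⟩, fun n hn => ?_⟩
  obtain ⟨m, hm, rfl⟩ := hbij.surjOn hn
  exact ⟨m, ⟨hm, rfl⟩, fun m' hm' => hbij.injOn hm'.1 hm hm'.2.symm⟩

/-- For `k ≥ c_g(b)`, every remainder of `a/b^{k+1}` has the unique form
`(a·g^{i+m·ord_g(b^k)}) mod b^{k+1} = ((a·g^i) mod b^k) + n·b^k` with `m, n ∈ {0,…,b−1}`;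
moreover, for each fixed `i` the resulting correspondence `m ↦ n` is a bijection of
`{0,…,b−1}` onto itself. -/
theorem remainders_next_level (g b a k : ℕ) (hg : 2 ≤ g) (hb : 1 < b)
    (hbg : Nat.gcd b g = 1) (ha : 0 < a) (hab : Nat.gcd a b = 1) (hak : a < b ^ k)
    (hk : cg g b ≤ k) :
    ∀ i : ℕ, i < ordg g (b ^ k) →
      (∀ m : ℕ, m < b → ∃! n : ℕ, n < b ∧
        a * g ^ (i + m * ordg g (b ^ k)) % b ^ (k + 1) = a * g ^ i % b ^ k + n * b ^ k) ∧
      (∀ n : ℕ, n < b → ∃! m : ℕ, m < b ∧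
        a * g ^ (i + m * ordg g (b ^ k)) % b ^ (k + 1) = a * g ^ i % b ^ k + n * b ^ k) :=
  remainders_next_level_general g b a k hg hb hbg hab hk
end

section
/- Let g ≥ 2, j ≥ 1 and b be integers with 0 < g^j ≤ b. Set h_1 = (⌈b/g^j⌉·g^j) mod b. Then for every s with 0 ≤ s < g^j, the minimum t_s = min{ t ∈ {0,…,b−1} : ⌊t·g^j/b⌋ = s } exists and is given by the closed formula t_s = (s·b + ((s·h_1) mod g^j))/g^j. -/
/-!
Write `G = g^j` and `c = ⌈b/G⌉`. Since `G ≤ b` we have `b ≤ cG < 2b`, so `h₁ = cG - b` and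
`G ∣ s·b + s·h₁`. Hence `s·b + ((s·h₁) mod G)` is the least multiple of `G` that is at least `s·b`,
and the formula is `⌈s·b/G⌉`, the least `t` with `s·b ≤ t·G`, i.e. with `⌊t·G/b⌋ ≥ s`.
Equality holds there because `⌈s·b/G⌉·G < s·b + G ≤ (s+1)·b`.
-/

namespace Nat

lemma mul_ceilDiv_lt_add {n G : ℕ} (hG : 0 < G) : n ⌈/⌉ G * G < n + G := by
  rw [ceilDiv_eq_add_pred_div]
  have := Nat.div_mul_le_self (n + G - 1) G
  omega

lemma add_mod_div_eq_ceilDiv {n m G : ℕ} (hG : 0 < G) (hdvd : G ∣ n + m) :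
    (n + m % G) / G = n ⌈/⌉ G := by
  have hdvd' : G ∣ n + m % G := by
    rwa [Nat.dvd_iff_mod_eq_zero, Nat.add_mod_mod, ← Nat.dvd_iff_mod_eq_zero]
  have hmod : m % G < G := Nat.mod_lt m hG
  obtain ⟨q, hq⟩ := hdvd'
  rw [hq, Nat.mul_div_cancel_left q hG, ceilDiv_eq_add_pred_div]
  refine (Nat.div_eq_of_lt_le ?_ ?_).symm <;> lia

lemma dvd_add_ceilDiv_mul_mod {G b : ℕ} (hG : 0 < G) (hb : G ≤ b) :
    G ∣ b + b ⌈/⌉ G * G % b := by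
  have hlo : b ≤ b ⌈/⌉ G * G := by
    rw [mul_comm, ← ceilDiv_le_iff_le_mul hG]
  have hhi := mul_ceilDiv_lt_add (n := b) hG
  have hmod : b ⌈/⌉ G * G % b = b ⌈/⌉ G * G - b := by
    rw [Nat.mod_eq_sub_mod hlo, Nat.mod_eq_of_lt (by omega)]
  rw [hmod, Nat.add_sub_cancel' hlo]
  exact Nat.dvd_mul_left G _

lemma isLeast_mul_div_eq {G b s : ℕ} (hb : G ≤ b) (hs : s < G) :
    IsLeast {t : ℕ | t < b ∧ t * G / b = s} (s * b ⌈/⌉ G) := by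
  have hG : 0 < G := by omega
  have hlo : s * b ≤ s * b ⌈/⌉ G * G := by
    rw [mul_comm _ G, ← ceilDiv_le_iff_le_mul hG]
  have hhi : s * b ⌈/⌉ G * G < (s + 1) * b := by
    have := mul_ceilDiv_lt_add (n := s * b) hG
    rw [Nat.succ_mul]; omega
  refine ⟨⟨?_, Nat.div_eq_of_lt_le hlo hhi⟩, fun t ⟨_, ht⟩ ↦ ?_⟩
  · have : (s + 1) * b ≤ G * b := Nat.mul_le_mul_right b hs
    exact Nat.lt_of_mul_lt_mul_right (a := G) (by rw [mul_comm b]; omega)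
  · rw [ceilDiv_le_iff_le_mul hG, ← ht, mul_comm G]
    exact Nat.div_mul_le_self (t * G) b

end Nat

theorem master_sequence_formula_general (g j b : ℕ) (hb : g ^ j ≤ b) :
    ∀ s : ℕ, s < g ^ j →
      IsLeast {t : ℕ | t < b ∧ t * g ^ j / b = s}
        ((s * b + (s * ((b + g ^ j - 1) / g ^ j * g ^ j % b)) % g ^ j) / g ^ j) := by
  intro s hs
  have hG : 0 < g ^ j := by omega
  have hdvd : g ^ j ∣ s * b + s * ((b + g ^ j - 1) / g ^ j * g ^ j % b) := by
    rw [← Nat.mul_add, ← Nat.ceilDiv_eq_add_pred_div]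
    exact (Nat.dvd_add_ceilDiv_mul_mod hG hb).mul_left s
  rw [Nat.add_mod_div_eq_ceilDiv hG hdvd]
  exact Nat.isLeast_mul_div_eq hb hs

/-- For `g ≥ 2`, `j ≥ 1` and `g^j ≤ b`, with
`h₁ = (⌈b/g^j⌉·g^j) mod b`, for every `s < g^j` the master-sequence entry
`t_s = min{ t ∈ {0,…,b−1} : ⌊t·g^j/b⌋ = s }` exists and equals
`(s·b + ((s·h₁) mod g^j))/g^j`. -/
theorem master_sequence_formula (g j b : ℕ) (hg : 2 ≤ g) (hj : 1 ≤ j) (hb : g ^ j ≤ b) :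
    ∀ s : ℕ, s < g ^ j →
      IsLeast {t : ℕ | t < b ∧ t * g ^ j / b = s}
        ((s * b + (s * ((b + g ^ j - 1) / g ^ j * g ^ j % b)) % g ^ j) / g ^ j) :=
  master_sequence_formula_general g j b hb
end

section
/- Let g ≥ 2 be an integer, a/b a purely periodic proper fraction (0 < a < b, gcd(a,b) = 1, gcd(b,g) = 1), and j ≥ 1. The g-ary expansion of a/b has complexity g^j (i.e. for every s ∈ {0,…,g^j−1} there exists i ≥ j with ⌊a·g^i/b⌋ mod g^j = s) if and only if both: (1) g^j ≤ b, and (2) for every s ∈ {0,…,g^j−1} there exists i ≥ 0 with t_s ≤ (a·g^i) mod b < t_{s+1}, where t_s = min{ t ∈ {0,…,b−1} : ⌊t·g^j/b⌋ = s } for 0 ≤ s < g^j and t_{g^j} = b. -/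
/-- The master sequence: for `s < g^j`, `ts g j b s` is the least `t ∈ {0,…,b−1}` with
`⌊t·g^j/b⌋ = s`; and `ts g j b s = b` for `s ≥ g^j` (in particular `t_{g^j} = b`). -/
noncomputable def ts (g j b s : ℕ) : ℕ :=
  if s < g ^ j then sInf {t : ℕ | t < b ∧ t * g ^ j / b = s} else b

/-!
Writing `a·g^m = q·b + r` with `r = a·g^m mod b`, the `j`-word of the expansion starting
after position `m` is `⌊r·g^j/b⌋`. The level sets of `t ↦ ⌊t·g^j/b⌋` are the
intervals `[⌈s·b/g^j⌉, ⌈(s+1)·b/g^j⌉)`, and when `g^j ≤ b` these left endpoints are exactly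
the master sequence `t_s`. So the word `s` occurs iff some residue `a·g^m mod b` lies in
`[t_s, t_{s+1})`; and if all `g^j` words occur they are values of `⌊t·g^j/b⌋` at the `b`
points `t < b`, which forces `g^j ≤ b`.
-/

theorem Nat.mul_div_mod_eq_mod_mul_div (x N b : ℕ) : x * N / b % N = x % b * N / b := by
  rcases Nat.eq_zero_or_pos N with rfl | hN
  · simp
  rcases Nat.eq_zero_or_pos b with rfl | hb
  · simp
  have hlt : x % b * N / b < N :=
    Nat.div_lt_of_lt_mul (Nat.mul_lt_mul_of_pos_right (Nat.mod_lt x hb) hN)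
  conv_lhs => rw [← Nat.div_add_mod x b, add_mul, mul_assoc, Nat.mul_add_div hb]
  rw [Nat.mul_add_mod_self_right, Nat.mod_eq_of_lt hlt]

section LevelSets

variable {N b s t : ℕ}

theorem Nat.le_mul_div_iff_ceilDiv_le (hN : 0 < N) (hb : 0 < b) :
    s ≤ t * N / b ↔ s * b ⌈/⌉ N ≤ t := by
  rw [Nat.le_div_iff_mul_le hb, ceilDiv_le_iff_le_mul hN, mul_comm t]

theorem Nat.mul_div_eq_iff_ceilDiv (hN : 0 < N) (hb : 0 < b) :
    t * N / b = s ↔ s * b ⌈/⌉ N ≤ t ∧ t < (s + 1) * b ⌈/⌉ N := by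
  rw [← not_le, ← le_mul_div_iff_ceilDiv_le hN hb, ← le_mul_div_iff_ceilDiv_le hN hb]
  omega

theorem Nat.mul_ceilDiv_lt (x : ℕ) (hN : 0 < N) : N * (x ⌈/⌉ N) < x + N := by
  rw [Nat.ceilDiv_eq_add_pred_div]
  have := Nat.mul_div_le (x + N - 1) N
  omega

end LevelSets

theorem ts_eq_ceilDiv {g j b s : ℕ} (hN : 0 < g ^ j) (hNb : g ^ j ≤ b) (hs : s ≤ g ^ j) :
    ts g j b s = s * b ⌈/⌉ g ^ j := by
  rcases hs.lt_or_eq with hs | rfl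
  · have hb : 0 < b := hN.trans_le hNb
    rw [ts, if_pos hs]
    apply IsLeast.csInf_eq
    have hlevel : s * b ⌈/⌉ g ^ j * g ^ j / b = s := by
      refine (Nat.mul_div_eq_iff_ceilDiv hN hb).2 ⟨le_rfl, ?_⟩
      rw [← not_le, ceilDiv_le_iff_le_mul hN, add_one_mul]
      have := Nat.mul_ceilDiv_lt (s * b) hN
      omega
    refine ⟨⟨?_, hlevel⟩, fun t ht => ((Nat.mul_div_eq_iff_ceilDiv hN hb).1 ht.2).1⟩
    rw [← hlevel, Nat.div_lt_iff_lt_mul hb] at hs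
    exact Nat.lt_of_mul_lt_mul_right (hs.trans_eq (mul_comm _ _))
  · rw [ts, if_neg (lt_irrefl _), ← smul_eq_mul, smul_ceilDiv hN]

theorem mul_div_eq_iff_ts {g j b s t : ℕ} (hNb : g ^ j ≤ b) (hs : s < g ^ j) :
    t * g ^ j / b = s ↔ ts g j b s ≤ t ∧ t < ts g j b (s + 1) := by
  have hN : 0 < g ^ j := by omega
  rw [ts_eq_ceilDiv hN hNb hs.le, ts_eq_ceilDiv hN hNb hs,
    Nat.mul_div_eq_iff_ceilDiv hN (by omega)]

theorem complexity_iff_general (g a b j : ℕ) (hab : a < b) :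
    (∀ s : ℕ, s < g ^ j → ∃ i : ℕ, j ≤ i ∧ (a * g ^ i / b) % g ^ j = s) ↔
      (g ^ j ≤ b ∧ ∀ s : ℕ, s < g ^ j → ∃ i : ℕ,
        ts g j b s ≤ a * g ^ i % b ∧ a * g ^ i % b < ts g j b (s + 1)) := by
  have hb : 0 < b := by omega
  have hword (m : ℕ) : a * g ^ (m + j) / b % g ^ j = a * g ^ m % b * g ^ j / b := by
    rw [pow_add, ← mul_assoc, Nat.mul_div_mod_eq_mod_mul_div]
  constructor
  · intro h
    have hcover (s : ℕ) (hs : s < g ^ j) : ∃ m, a * g ^ m % b * g ^ j / b = s := by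
      obtain ⟨i, hji, hi⟩ := h s hs
      obtain ⟨m, rfl⟩ := Nat.exists_eq_add_of_le' hji
      exact ⟨m, hword m ▸ hi⟩
    have hNb : g ^ j ≤ b := by
      simpa using Finset.card_le_card_of_surjOn (fun t => t * g ^ j / b)
        (s := Finset.range b) (t := Finset.range (g ^ j)) fun s hs => by
          obtain ⟨m, hm⟩ := hcover s (Finset.mem_range.1 hs)
          exact ⟨a * g ^ m % b, Finset.mem_range.2 (Nat.mod_lt _ hb), hm⟩
    refine ⟨hNb, fun s hs => ?_⟩
    obtain ⟨m, hm⟩ := hcover s hs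
    exact ⟨m, (mul_div_eq_iff_ts hNb hs).1 hm⟩
  · rintro ⟨hNb, h⟩ s hs
    obtain ⟨m, hm⟩ := h s hs
    exact ⟨m + j, Nat.le_add_left j m, (hword m).trans ((mul_div_eq_iff_ts hNb hs).2 hm)⟩

/-- The `g`-ary expansion of a purely periodic proper fraction `a/b` has
complexity `g^j` (every `j`-word `s < g^j` occurs, i.e. `s = ⌊a·g^i/b⌋ mod g^j` for some
`i ≥ j`) if and only if `g^j ≤ b` and every interval `[t_s, t_{s+1})` contains some
power residue `(a·g^i) mod b`. -/
theorem complexity_iff (g a b j : ℕ) (hg : 2 ≤ g) (ha : 0 < a) (hab : a < b)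
    (hcop : Nat.gcd a b = 1) (hbg : Nat.gcd b g = 1) (hj : 1 ≤ j) :
    (∀ s : ℕ, s < g ^ j → ∃ i : ℕ, j ≤ i ∧ (a * g ^ i / b) % g ^ j = s) ↔
      (g ^ j ≤ b ∧ ∀ s : ℕ, s < g ^ j → ∃ i : ℕ,
        ts g j b s ≤ a * g ^ i % b ∧ a * g ^ i % b < ts g j b (s + 1)) :=
  complexity_iff_general g a b j hab
end

section
/- Let g ≥ 2 be an integer, a/b a purely periodic proper fraction (0 < a < b, gcd(a,b) = 1, gcd(b,g) = 1), and j ≥ 1. Let G be the gap of the set of power residues of a/b, i.e. the maximal difference between consecutive elements of the sorted set {−1} ∪ { (a·g^i) mod b : i ≥ 0 } ∪ {b}. If ⌊b/g^j⌋ ≥ G, then the g-ary expansion of a/b has complexity g^j, i.e. for every s ∈ {0,…,g^j−1} there exists i ≥ j with ⌊a·g^i/b⌋ mod g^j = s. -/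
/-!
Put `M = g ^ j`. The `j` digits of `a/b` following position `i` are `⌊M · r / b⌋`, where
`r = a·g^i mod b` is the `i`-th power residue. So the word `s` occurs once some residue lies in
`[s·b/M, (s+1)·b/M)`, and this interval contains a window of `⌊b/M⌋ ≥ G` consecutive integers
inside `[0, b]`. A window of `G` consecutive integers cannot fit strictly between two consecutive
elements of `{-1} ∪ residues ∪ {b}`, whose distance is at most `G`, so it contains a residue.
-/

def consecutiveGaps (S : Set ℤ) : Set ℤ :=
  {d | ∃ r'' ∈ S, ∃ r' ∈ S, r'' < r' ∧ (∀ x ∈ S, ¬(r'' < x ∧ x < r')) ∧ d = r' - r''}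

def powerResidues (g a b : ℕ) : Set ℤ :=
  {r | ∃ i : ℕ, r = ((a * g ^ i % b : ℕ) : ℤ)}

theorem exists_mem_Ico_of_mem_upperBounds_consecutiveGaps {S : Set ℤ} {G lo hi L : ℤ}
    (hG : G ∈ upperBounds (consecutiveGaps S)) (hlo : lo ∈ S) (hhi : hi ∈ S)
    (hloL : lo < L) (hLhi : L ≤ hi) : ∃ x ∈ S, L ≤ x ∧ x < L + G := by
  obtain ⟨r'', ⟨hr''S, hr''L⟩, hr''max⟩ :=
    Int.exists_greatest_of_bdd (P := fun x => x ∈ S ∧ x < L)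
      ⟨L, fun _ hz => hz.2.le⟩ ⟨lo, hlo, hloL⟩
  obtain ⟨r', ⟨hr'S, hr''r'⟩, hr'min⟩ :=
    Int.exists_least_of_bdd (P := fun x => x ∈ S ∧ r'' < x)
      ⟨r'', fun _ hz => hz.2.le⟩ ⟨hi, hhi, by omega⟩
  have hconsec : ∀ x ∈ S, ¬(r'' < x ∧ x < r') := fun x hx h =>
    (hr'min x ⟨hx, h.1⟩).not_gt h.2
  have hgap : r' - r'' ≤ G := hG ⟨r'', hr''S, r', hr'S, hr''r', hconsec, rfl⟩
  have hLr' : L ≤ r' := not_lt.1 fun h => (hr''max r' ⟨hr'S, h⟩).not_gt hr''r'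
  exact ⟨r', hr'S, hLr', by omega⟩

theorem exists_powerResidue_mem_Ico {g a b L q : ℕ} {G : ℤ}
    (hG : G ∈ upperBounds (consecutiveGaps ({-1, (b : ℤ)} ∪ powerResidues g a b)))
    (hGq : G ≤ q) (hLq : L + q ≤ b) : ∃ i : ℕ, L ≤ a * g ^ i % b ∧ a * g ^ i % b < L + q := by
  obtain ⟨x, hx, hLx, hxL⟩ := exists_mem_Ico_of_mem_upperBounds_consecutiveGaps hG
    (lo := -1) (hi := b) (L := L) (by simp) (by simp) (by omega) (by omega)
  rcases hx with hx | ⟨i, rfl⟩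
  · simp only [Set.mem_insert_iff, Set.mem_singleton_iff] at hx
    omega
  · exact ⟨i, by omega, by omega⟩

theorem exists_Ico_forall_mul_div_eq {b M s : ℕ} (hs : s < M) : ∃ L : ℕ, L + b / M ≤ b ∧
    ∀ r, L ≤ r → r < L + b / M → r * M / b = s := by
  -- `L = ⌈s b / M⌉`
  have hL := Nat.div_add_mod' (s * b + M - 1) M
  have hLmod := Nat.mod_lt (s * b + M - 1) (by omega : 0 < M)
  have hq := Nat.div_add_mod' b M
  generalize b / M = q at *
  generalize (s * b + M - 1) / M = L at *
  have hLlo : s * b ≤ L * M := by omega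
  have hLhi : L * M + 1 ≤ s * b + M := by omega
  have hqM : q * M ≤ b := by omega
  refine ⟨L, ?_, fun r hLr hrL => Nat.div_eq_of_lt_le ?_ ?_⟩
  · by_contra! h
    linarith [Nat.mul_le_mul_right M h, Nat.mul_le_mul_right b hs]
  · linarith [Nat.mul_le_mul_right M hLr]
  · linarith [Nat.mul_le_mul_right M hrL]

theorem mul_div_mod_eq_of_mod_mul_div_eq {n b M s : ℕ} (hdigit : n % b * M / b = s)
    (hs : s < M) : n * M / b % M = s := by
  rcases Nat.eq_zero_or_pos b with rfl | hb
  · simpa using hdigit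
  have hsplit : n * M = n % b * M + n / b * M * b := by
    conv_lhs => rw [← Nat.mod_add_div n b]
    ring
  rw [hsplit, Nat.add_mul_div_right _ _ hb, hdigit, Nat.add_mul_mod_self_right,
    Nat.mod_eq_of_lt hs]

theorem gap_criterion_sufficient_general (g a b j : ℕ) (G : ℤ)
    (hG : IsGreatest {d : ℤ |
        ∃ r'' ∈ ({-1, (b : ℤ)} ∪ {r : ℤ | ∃ i : ℕ, r = ((a * g ^ i % b : ℕ) : ℤ)}),
        ∃ r' ∈ ({-1, (b : ℤ)} ∪ {r : ℤ | ∃ i : ℕ, r = ((a * g ^ i % b : ℕ) : ℤ)}),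
          r'' < r' ∧
          (∀ x ∈ ({-1, (b : ℤ)} ∪ {r : ℤ | ∃ i : ℕ, r = ((a * g ^ i % b : ℕ) : ℤ)}),
            ¬(r'' < x ∧ x < r')) ∧
          d = r' - r''} G)
    (hbig : G ≤ ((b / g ^ j : ℕ) : ℤ)) :
    ∀ s : ℕ, s < g ^ j → ∃ i : ℕ, j ≤ i ∧ (a * g ^ i / b) % g ^ j = s := by
  intro s hs
  obtain ⟨L, hLb, hwindow⟩ := exists_Ico_forall_mul_div_eq (b := b) hs
  obtain ⟨i, hLi, hiL⟩ := exists_powerResidue_mem_Ico hG.2 hbig hLb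
  refine ⟨i + j, Nat.le_add_left j i, ?_⟩
  rw [pow_add, ← mul_assoc]
  exact mul_div_mod_eq_of_mod_mul_div_eq (hwindow _ hLi hiL) hs

/-- Let `G` be the gap of `a/b`, i.e. the greatest difference `r' − r''`
over pairs of consecutive elements `r'' < r'` of the sorted set
`{−1} ∪ {(a·g^i) mod b : i ≥ 0} ∪ {b}`. If `⌊b/g^j⌋ ≥ G`, then the `g`-ary expansion of
`a/b` has complexity `g^j`. -/
theorem gap_criterion_sufficient (g a b j : ℕ) (G : ℤ) (hg : 2 ≤ g) (ha : 0 < a)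
    (hab : a < b) (hcop : Nat.gcd a b = 1) (hbg : Nat.gcd b g = 1) (hj : 1 ≤ j)
    (hG : IsGreatest {d : ℤ |
        ∃ r'' ∈ ({-1, (b : ℤ)} ∪ {r : ℤ | ∃ i : ℕ, r = ((a * g ^ i % b : ℕ) : ℤ)}),
        ∃ r' ∈ ({-1, (b : ℤ)} ∪ {r : ℤ | ∃ i : ℕ, r = ((a * g ^ i % b : ℕ) : ℤ)}),
          r'' < r' ∧
          (∀ x ∈ ({-1, (b : ℤ)} ∪ {r : ℤ | ∃ i : ℕ, r = ((a * g ^ i % b : ℕ) : ℤ)}),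
            ¬(r'' < x ∧ x < r')) ∧
          d = r' - r''} G)
    (hbig : G ≤ ((b / g ^ j : ℕ) : ℤ)) :
    ∀ s : ℕ, s < g ^ j → ∃ i : ℕ, j ≤ i ∧ (a * g ^ i / b) % g ^ j = s :=
  gap_criterion_sufficient_general g a b j G hG hbig
end

section
/- Let g ≥ 2 be an integer, a/b a purely periodic proper fraction (0 < a < b, gcd(a,b) = 1, gcd(b,g) = 1), and j ≥ 1. Let G be the gap of the set of power residues of a/b, i.e. the maximal difference between consecutive elements of the sorted set {−1} ∪ { (a·g^i) mod b : i ≥ 0 } ∪ {b}. If the g-ary expansion of a/b has complexity g^j (for every s ∈ {0,…,g^j−1} there exists i ≥ j with ⌊a·g^i/b⌋ mod g^j = s), then ⌊b/g^j⌋ > G/2 − 1, equivalently 2·⌊b/g^j⌋ + 2 > G. Consequently, if ⌊b/g^j⌋ ≤ G/2 − 1 then the expansion does not have complexity g^j. -/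
/-!
A word `s` of length `j` occurs at position `i ≥ j` of the expansion of `a/b` exactly when the
residue `r = a·g^(i-j) mod b` satisfies `⌊r·g^j/b⌋ = s`, i.e. lies in the `s`-th of the `g^j`
blocks `[s·b/g^j, (s+1)·b/g^j)` into which `[0, b)` is cut. Full complexity thus puts a residue
in every block. A point in block `s` then has a residue or `b` above it within the next block,
so at distance less than `2·b/g^j < 2·⌊b/g^j⌋ + 2`; this bounds every gap.
-/

theorem Nat.mul_div_mod_self_eq_mod_mul_div (n b c : ℕ) : n * c / b % c = n % b * c / b := by
  rcases Nat.eq_zero_or_pos b with rfl | hb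
  · simp
  rcases Nat.eq_zero_or_pos c with rfl | hc
  · simp
  have hlt : n % b * c / b < c :=
    Nat.div_lt_of_lt_mul (Nat.mul_lt_mul_of_pos_right (n.mod_lt hb) hc)
  conv_lhs => rw [← Nat.div_add_mod n b]
  rw [add_mul, mul_assoc, Nat.mul_add_div hb, Nat.mul_add_mod_self_right, Nat.mod_eq_of_lt hlt]

theorem exists_mod_mul_div_eq_of_forall_word {g a b j : ℕ}
    (hcpx : ∀ s : ℕ, s < g ^ j → ∃ i : ℕ, j ≤ i ∧ (a * g ^ i / b) % g ^ j = s) {s : ℕ}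
    (hs : s < g ^ j) : ∃ i, a * g ^ i % b * g ^ j / b = s := by
  obtain ⟨i, hji, rfl⟩ := hcpx s hs
  refine ⟨i - j, ?_⟩
  rw [← Nat.mul_div_mod_self_eq_mod_mul_div, mul_assoc, ← pow_add, Nat.sub_add_cancel hji]

section Blocks

variable {R : Set ℕ} {b N : ℕ}

theorem exists_mem_lt_div_add_one (hb : 0 < b) (hN : 0 < N)
    (hR : ∀ s < N, ∃ r ∈ R, r * N / b = s) : ∃ r ∈ R, r < b / N + 1 := by
  obtain ⟨r, hr, hr0⟩ := hR 0 hN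
  exact ⟨r, hr, Nat.lt_succ_of_le ((Nat.le_div_iff_mul_le hN).2
    ((Nat.div_eq_zero_iff_lt hb).1 hr0).le)⟩

theorem exists_mem_insert_lt_add_two_mul (hb : 0 < b) (hR : ∀ s < N, ∃ r ∈ R, r * N / b = s)
    {x : ℕ} (hx : x < b) : ∃ z ∈ insert b R, x < z ∧ z * N < x * N + 2 * b := by
  set s := x * N / b
  have hsx : s * b ≤ x * N := Nat.div_mul_le_self _ _
  rcases lt_or_ge (s + 1) N with hsN | hsN
  · obtain ⟨r, hr, hrs⟩ := hR (s + 1) hsN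
    refine ⟨r, Set.mem_insert_of_mem _ hr, ?_, ?_⟩
    · by_contra! hrx
      have := Nat.div_le_div_right (c := b) (Nat.mul_le_mul_right N hrx)
      omega
    · have : r * N < (s + 2) * b := (Nat.div_lt_iff_lt_mul hb).1 (by omega)
      nlinarith
  · refine ⟨b, Set.mem_insert _ _, hx, ?_⟩
    nlinarith

theorem exists_mem_insert_lt_add_two_mul_div_add_two (hb : 0 < b) (hN : 0 < N)
    (hR : ∀ s < N, ∃ r ∈ R, r * N / b = s) {x : ℕ} (hx : x < b) :
    ∃ z ∈ insert b R, x < z ∧ z < x + 2 * (b / N) + 2 := by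
  obtain ⟨z, hz, hxz, hzN⟩ := exists_mem_insert_lt_add_two_mul hb hR hx
  refine ⟨z, hz, hxz, Nat.lt_of_mul_lt_mul_right (a := N) ?_⟩
  have := Nat.lt_mul_div_succ b hN
  nlinarith

end Blocks

def extendedPowerResidues (g a b : ℕ) : Set ℤ :=
  {-1, (b : ℤ)} ∪ {r : ℤ | ∃ i : ℕ, r = ((a * g ^ i % b : ℕ) : ℤ)}

theorem gap_lt_of_forall_exists_mem_sub_lt {S : Set ℤ} {G D : ℤ}
    (hG : IsGreatest {d : ℤ | ∃ x ∈ S, ∃ y ∈ S, x < y ∧ (∀ z ∈ S, ¬(x < z ∧ z < y)) ∧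
      d = y - x} G)
    (hS : ∀ x ∈ S, ∀ y ∈ S, x < y → ∃ z ∈ S, x < z ∧ z - x < D) : G < D := by
  obtain ⟨x, hx, y, hy, hxy, hconsec, rfl⟩ := hG.1
  obtain ⟨z, hz, hxz, hzD⟩ := hS x hx y hy hxy
  have : y ≤ z := not_lt.1 fun hzy => hconsec z hz ⟨hxz, hzy⟩
  omega

theorem exists_mem_sub_lt_of_forall_word {g a b j : ℕ} (hg : 0 < g) (hb : 0 < b)
    (hcpx : ∀ s : ℕ, s < g ^ j → ∃ i : ℕ, j ≤ i ∧ (a * g ^ i / b) % g ^ j = s) :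
    ∀ x ∈ extendedPowerResidues g a b, ∀ y ∈ extendedPowerResidues g a b, x < y →
      ∃ z ∈ extendedPowerResidues g a b, x < z ∧ z - x < 2 * ((b / g ^ j : ℕ) : ℤ) + 2 := by
  have hN : 0 < g ^ j := pow_pos hg j
  have hR : ∀ s < g ^ j, ∃ r ∈ Set.range (fun i => a * g ^ i % b), r * g ^ j / b = s :=
    fun s hs =>
      let ⟨i, hi⟩ := exists_mod_mul_div_eq_of_forall_word hcpx hs
      ⟨_, ⟨i, rfl⟩, hi⟩
  have hmem : ∀ z ∈ insert b (Set.range (fun i => a * g ^ i % b)),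
      ((z : ℕ) : ℤ) ∈ extendedPowerResidues g a b := by
    rintro z (rfl | ⟨i, rfl⟩)
    exacts [Or.inl (Or.inr rfl), Or.inr ⟨i, rfl⟩]
  have hle : ∀ y ∈ extendedPowerResidues g a b, y ≤ b := by
    rintro y ((rfl | rfl) | ⟨i, rfl⟩)
    · omega
    · rfl
    · exact_mod_cast (Nat.mod_lt _ hb).le
  rintro x ((rfl | rfl) | ⟨i, rfl⟩) y hy hxy
  · obtain ⟨r, hr, hrm⟩ := exists_mem_lt_div_add_one hb hN hR
    exact ⟨r, hmem r (Set.mem_insert_of_mem _ hr), by omega, by omega⟩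
  · exact absurd (hle y hy) (not_le.2 hxy)
  · obtain ⟨z, hz, hxz, hzm⟩ :=
      exists_mem_insert_lt_add_two_mul_div_add_two hb hN hR (Nat.mod_lt (a * g ^ i) hb)
    exact ⟨z, hmem z hz, by omega, by omega⟩

theorem gap_criterion_necessary_general (g a b j : ℕ) (G : ℤ) (hg : 2 ≤ g)
    (hab : a < b)
    (hG : IsGreatest {d : ℤ |
        ∃ r'' ∈ ({-1, (b : ℤ)} ∪ {r : ℤ | ∃ i : ℕ, r = ((a * g ^ i % b : ℕ) : ℤ)}),
        ∃ r' ∈ ({-1, (b : ℤ)} ∪ {r : ℤ | ∃ i : ℕ, r = ((a * g ^ i % b : ℕ) : ℤ)}),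
          r'' < r' ∧
          (∀ x ∈ ({-1, (b : ℤ)} ∪ {r : ℤ | ∃ i : ℕ, r = ((a * g ^ i % b : ℕ) : ℤ)}),
            ¬(r'' < x ∧ x < r')) ∧
          d = r' - r''} G)
    (hcpx : ∀ s : ℕ, s < g ^ j → ∃ i : ℕ, j ≤ i ∧ (a * g ^ i / b) % g ^ j = s) :
    G < 2 * ((b / g ^ j : ℕ) : ℤ) + 2 :=
  gap_lt_of_forall_exists_mem_sub_lt hG
    (exists_mem_sub_lt_of_forall_word (by omega) (by omega) hcpx)

/-- Let `G` be the gap of `a/b`, i.e. the greatest difference `r' − r''`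
over pairs of consecutive elements `r'' < r'` of the sorted set
`{−1} ∪ {(a·g^i) mod b : i ≥ 0} ∪ {b}`. If the `g`-ary expansion of `a/b` has complexity
`g^j`, then `2·⌊b/g^j⌋ + 2 > G` (equivalently `⌊b/g^j⌋ > G/2 − 1`); consequently if
`⌊b/g^j⌋ ≤ G/2 − 1` the expansion does not have complexity `g^j`. -/
theorem gap_criterion_necessary (g a b j : ℕ) (G : ℤ) (hg : 2 ≤ g) (ha : 0 < a)
    (hab : a < b) (hcop : Nat.gcd a b = 1) (hbg : Nat.gcd b g = 1) (hj : 1 ≤ j)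
    (hG : IsGreatest {d : ℤ |
        ∃ r'' ∈ ({-1, (b : ℤ)} ∪ {r : ℤ | ∃ i : ℕ, r = ((a * g ^ i % b : ℕ) : ℤ)}),
        ∃ r' ∈ ({-1, (b : ℤ)} ∪ {r : ℤ | ∃ i : ℕ, r = ((a * g ^ i % b : ℕ) : ℤ)}),
          r'' < r' ∧
          (∀ x ∈ ({-1, (b : ℤ)} ∪ {r : ℤ | ∃ i : ℕ, r = ((a * g ^ i % b : ℕ) : ℤ)}),
            ¬(r'' < x ∧ x < r')) ∧
          d = r' - r''} G)
    (hcpx : ∀ s : ℕ, s < g ^ j → ∃ i : ℕ, j ≤ i ∧ (a * g ^ i / b) % g ^ j = s) :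
    G < 2 * ((b / g ^ j : ℕ) : ℤ) + 2 :=
  gap_criterion_necessary_general g a b j G hg hab hG hcpx
end

section
/- Let g ≥ 2 be an integer and b > 1 an integer having at least one prime factor that does not divide g. Let (a_k)_{k≥1} be a sequence of positive integers with gcd(a_k, b) = 1 for all k, and let j ≥ 1. For each k and each s ∈ {0,…,g^j−1}, the limiting relative frequency d_k(s) = lim_{N→∞} (1/N)·#{ i : j ≤ i ≤ N and ⌊a_k·g^i/b^k⌋ mod g^j = s } exists (the g-ary expansion of a_k/b^k being eventually periodic), and for every s ∈ {0,…,g^j−1} one has d_k(s) → 1/g^j as k → ∞. -/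
/-!
Write `b = m * Q` with `Q ∣ g ^ b` and `m` coprime to `g`. Then the `j`-word at position
`b * k + j + n` of `a / b ^ k` is `⌊g ^ j * (c * g ^ n mod m ^ k) / m ^ k⌋` for a unit `c`
modulo `m ^ k`, so the expansion is eventually periodic and the frequencies exist.

Fix a prime `p ∣ m` (one exists since `p ∣ b`, `p ∤ g`). By lifting the exponent there are `E`
and `m ^ k = D * P` with `P = p ^ (k v_p(m) - β)`, `β` independent of `k`, such that `g ^ E` has
order `P` modulo `m ^ k` and is `≡ 1 mod D`; its powers are then exactly the residues
`≡ 1 mod D`. Over one period the residues `c * g ^ n` thus fill arithmetic progressions of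
difference `D` and length `P`, and each such progression meets the interval
`[s m ^ k / g ^ j, (s + 1) m ^ k / g ^ j)` in `P / g ^ j + O(1)` points. Hence the frequency of
every word is `1 / g ^ j + O(1 / P)`, and `P → ∞` with `k`.
-/

open Finset Filter Topology

theorem tendsto_div_of_add_period {u : ℕ → ℝ} {L N₀ : ℕ} {C : ℝ} (hL : 0 < L)
    (hu : ∀ N ≥ N₀, u (N + L) = u N + C) :
    Tendsto (fun N : ℕ => u N / N) atTop (𝓝 (C / L)) := by
  set v : ℕ → ℝ := fun N => u N - C / L * N with hv
  have hper : ∀ N ≥ N₀, v (N + L) = v N := by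
    intro N hN
    simp only [hv, hu N hN]
    push_cast
    field_simp
    ring
  have hbdd : ∀ N, |v N| ≤ ∑ n ∈ range (N₀ + L), |v n| := by
    intro N
    induction N using Nat.strong_induction_on with
    | _ N ih =>
      by_cases hN : N < N₀ + L
      · exact single_le_sum (f := fun n => |v n|) (fun n _ => abs_nonneg _) (mem_range.2 hN)
      · obtain ⟨M, rfl⟩ : ∃ M, N = M + L := ⟨N - L, by omega⟩
        rw [hper M (by omega)]
        exact ih M (by omega)
  have hv0 : Tendsto (fun N : ℕ => v N / N) atTop (𝓝 0) :=
    squeeze_zero_norm (fun N => by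
        rw [norm_div, Real.norm_natCast]
        exact div_le_div_of_nonneg_right (hbdd N) (Nat.cast_nonneg _))
      (tendsto_const_div_atTop_nhds_zero_nat _)
  have hlim : Tendsto (fun N : ℕ => C / L + v N / N) atTop (𝓝 (C / L)) := by
    simpa using hv0.const_add (C / L)
  refine hlim.congr' ?_
  filter_upwards [eventually_ne_atTop 0] with N hN
  simp only [hv]
  field_simp
  ring

theorem card_filter_Ioc_add_period (f : ℕ → Prop) [DecidablePred f] {i₀ L N : ℕ}
    (hf : ∀ i ≥ i₀, f (i + L) ↔ f i) (hN : i₀ ≤ N + 1) :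
    #{i ∈ Ioc N (N + L) | f i} = #{n ∈ range L | f (i₀ + n)} := by
  have hper : Function.Periodic (fun n => f (i₀ + n)) L := fun n =>
    propext (by simpa only [add_assoc] using hf (i₀ + n) (by omega))
  obtain ⟨n₀, hn₀⟩ : ∃ n₀, N + 1 = i₀ + n₀ := ⟨N + 1 - i₀, by omega⟩
  rw [← Nat.count_eq_card_filter_range, ← Nat.filter_Ico_card_eq_of_periodic n₀ L _ hper,
    ← Finset.Ico_add_one_add_one_eq_Ioc, show N + L + 1 = i₀ + (n₀ + L) by omega, hn₀,
    ← map_add_left_Ico, filter_map, card_map]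
  rfl

theorem tendsto_card_filter_Icc_div_of_periodic (f : ℕ → Prop) [DecidablePred f] (j : ℕ)
    {i₀ L : ℕ} (hL : 0 < L) (hf : ∀ i ≥ i₀, f (i + L) ↔ f i) :
    Tendsto (fun N : ℕ => (#{i ∈ Icc j N | f i} : ℝ) / N) atTop
      (𝓝 ((#{n ∈ range L | f (i₀ + n)} : ℝ) / L)) := by
  refine tendsto_div_of_add_period (N₀ := i₀ + j) hL fun N hN => ?_
  have hsplit : #{i ∈ Icc j (N + L) | f i} =
      #{i ∈ Icc j N | f i} + #{i ∈ Ioc N (N + L) | f i} := by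
    rw [← card_union_of_disjoint, ← filter_union]
    · congr 2
      ext i
      simp only [mem_union, mem_Icc, mem_Ioc]
      omega
    exact disjoint_filter_filter (disjoint_left.2 fun i hi hi' => by
      simp only [mem_Icc, mem_Ioc] at hi hi'
      omega)
  rw [hsplit, card_filter_Ioc_add_period f hf (by omega), Nat.cast_add]

theorem mul_pow_add_div_mod_pow {g : ℕ} (c m n j : ℕ) (hg : 0 < g) (hm : 0 < m) :
    c * g ^ (n + j) / m % g ^ j = g ^ j * (c * g ^ n % m) / m := by
  have hlt : g ^ j * (c * g ^ n % m) / m < g ^ j := Nat.div_lt_of_lt_mul (by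
    rw [mul_comm m]
    exact Nat.mul_lt_mul_of_pos_left (Nat.mod_lt _ hm) (by positivity))
  conv_lhs => rw [pow_add, ← mul_assoc, ← Nat.mod_add_div (c * g ^ n) m]
  rw [add_mul, mul_comm (c * g ^ n % m), mul_assoc, Nat.add_mul_div_left _ _ hm,
    Nat.add_mul_mod_self_right, Nat.mod_eq_of_lt hlt]

theorem mul_pow_add_div_mul_mod_pow {x g M Q i₀ : ℕ} (j n : ℕ) (hg : 0 < g) (hM : 0 < M)
    (hQ : Q ∣ g ^ i₀) (hQ0 : 0 < Q) :
    x * g ^ (i₀ + j + n) / (M * Q) % g ^ j = g ^ j * (x * g ^ i₀ / Q * g ^ n % M) / M := by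
  obtain ⟨c, hc⟩ := hQ.mul_left x
  rw [add_assoc, pow_add, ← mul_assoc, hc, mul_comm M, mul_assoc, Nat.mul_div_mul_left _ _ hQ0,
    Nat.mul_div_cancel_left _ hQ0, add_comm j, mul_pow_add_div_mod_pow _ _ _ _ hg hM]

theorem exists_eq_mul_coprime_dvd_pow {b g : ℕ} (hb : b ≠ 0) (hg : g ≠ 0) :
    ∃ m Q, b = m * Q ∧ Q ∣ g ^ b ∧ m.Coprime g := by
  refine ⟨b / b.gcd (g ^ b), b.gcd (g ^ b), (Nat.div_mul_cancel (Nat.gcd_dvd_left _ _)).symm,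
    Nat.gcd_dvd_right _ _, Nat.coprime_of_dvd fun q hq hqm hqg => ?_⟩
  have hm0 : b / b.gcd (g ^ b) ≠ 0 := (Nat.div_pos (Nat.gcd_le_left _ (Nat.pos_of_ne_zero hb))
    (Nat.gcd_pos_of_pos_left _ (Nat.pos_of_ne_zero hb))).ne'
  have hpos := hq.factorization_pos_of_dvd hm0 hqm
  rw [Nat.factorization_div (Nat.gcd_dvd_left _ _), Nat.factorization_gcd hb (pow_ne_zero _ hg),
    Nat.factorization_pow] at hpos
  simp only [Finsupp.coe_tsub, Pi.sub_apply, Finsupp.inf_apply, Finsupp.smul_apply,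
    smul_eq_mul] at hpos
  -- `q` divides `gcd b (g ^ b)` to its full power in `b`, because `v_q(b) < b ≤ b * v_q(g)`
  have hlt := Nat.factorization_lt q hb
  have := Nat.le_mul_of_pos_right b (hq.factorization_pos_of_dvd hg hqg)
  omega

/-- The powers of `g ^ E` modulo `M = D * P` have period exactly `P` and are `≡ 1 mod D`, so
they run exactly through the `P` residues `≡ 1 mod D` modulo `M`. -/
structure IsCongruenceOrbit (g M D P E : ℕ) : Prop where
  eq_mul : M = D * P
  pos : 0 < E
  modEq_one : g ^ E ≡ 1 [MOD D]
  pow_modEq_one_iff : ∀ t, (g ^ E) ^ t ≡ 1 [MOD M] ↔ P ∣ t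

namespace IsCongruenceOrbit

variable {g M D P E : ℕ}

theorem of_pow {e : ℕ} (h : IsCongruenceOrbit (g ^ e) M D P E) (he : 0 < e) :
    IsCongruenceOrbit g M D P (e * E) where
  eq_mul := h.eq_mul
  pos := Nat.mul_pos he h.pos
  modEq_one := by rw [pow_mul]; exact h.modEq_one
  pow_modEq_one_iff := by rw [pow_mul]; exact h.pow_modEq_one_iff

theorem factors_pos (h : IsCongruenceOrbit g M D P E) (hM : 0 < M) : 0 < D ∧ 0 < P :=
  CanonicallyOrderedAdd.mul_pos.1 (h.eq_mul ▸ hM)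

theorem pow_period_modEq_one (h : IsCongruenceOrbit g M D P E) : g ^ (E * P) ≡ 1 [MOD M] := by
  rw [pow_mul]
  exact (h.pow_modEq_one_iff P).2 dvd_rfl

theorem orderOf_eq (h : IsCongruenceOrbit g M D P E) : orderOf ((g : ZMod M) ^ E) = P := by
  refine Nat.dvd_antisymm (orderOf_dvd_of_pow_eq_one ?_) ((h.pow_modEq_one_iff _).1 ?_)
  · exact_mod_cast (ZMod.natCast_eq_natCast_iff _ _ _).2 ((h.pow_modEq_one_iff P).2 dvd_rfl)
  · rw [← ZMod.natCast_eq_natCast_iff]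
    push_cast
    exact pow_orderOf_eq_one _

end IsCongruenceOrbit

theorem card_filter_comp_of_injOn {α β : Type*} [DecidableEq β] {s : Finset α} {f : α → β}
    (hf : Set.InjOn f s) (φ : β → Prop) [DecidablePred φ] :
    #{a ∈ s | φ (f a)} = #{b ∈ s.image f | φ b} := by
  rw [filter_image, card_image_of_injOn (hf.mono (filter_subset _ _))]

theorem card_filter_range_mul_pow_mod {g M D P E y : ℕ} (h : IsCongruenceOrbit g M D P E)
    (hD : 0 < D) (hy : y.Coprime M) (φ : ℕ → Prop) [DecidablePred φ] :
    #{t ∈ range P | φ (y * (g ^ E) ^ t % M)} = #{z ∈ range P | φ (y % D + D * z)} := by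
  have hinj : Set.InjOn (fun t => y * (g ^ E) ^ t % M) (range P) := by
    intro t ht t' ht' heq
    have hcast := (ZMod.natCast_eq_natCast_iff' (y * (g ^ E) ^ t) (y * (g ^ E) ^ t') M).2 heq
    push_cast at hcast
    refine pow_injOn_Iio_orderOf ?_ ?_
      (((ZMod.isUnit_iff_coprime y M).2 hy).mul_left_cancel hcast)
    · simpa [h.orderOf_eq] using ht
    · simpa [h.orderOf_eq] using ht'
  have hinj' : Set.InjOn (fun z => y % D + D * z) (range P) := fun z _ z' _ hzz' =>
    Nat.eq_of_mul_eq_mul_left hD (Nat.add_left_cancel hzz')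
  have himage : (range P).image (fun t => y * (g ^ E) ^ t % M) =
      (range P).image (fun z => y % D + D * z) := by
    refine eq_of_subset_of_card_le (fun x hx => ?_) ?_
    · obtain ⟨t, ht, rfl⟩ := mem_image.1 hx
      have hmod : y * (g ^ E) ^ t % M % D = y % D := by
        rw [Nat.mod_mod_of_dvd _ ⟨P, h.eq_mul⟩]
        have := (h.modEq_one.pow t).mul_left y
        rwa [one_pow, mul_one] at this
      refine mem_image.2 ⟨y * (g ^ E) ^ t % M / D, mem_range.2 ?_, by
        rw [← hmod, Nat.mod_add_div]⟩
      rw [Nat.div_lt_iff_lt_mul hD, mul_comm P, ← h.eq_mul]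
      exact Nat.mod_lt _ (h.eq_mul ▸ Nat.mul_pos hD (Nat.zero_lt_of_lt (mem_range.1 ht)))
    · rw [card_image_of_injOn hinj]
      exact card_image_le
  rw [card_filter_comp_of_injOn hinj, card_filter_comp_of_injOn hinj', himage]

theorem natCeil_lt_add_one_of_neg_one_lt {x : ℝ} (hx : -1 < x) : (⌈x⌉₊ : ℝ) < x + 1 := by
  rcases le_total x 0 with h | h
  · rw [Nat.ceil_eq_zero.2 h, Nat.cast_zero]
    linarith
  · exact Nat.ceil_lt_add_one h

theorem abs_card_filter_range_sub_lt {x y : ℝ} {n : ℕ} (hx : -1 < x) (hxy : x ≤ y)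
    (hy : y ≤ n) :
    |(#{z ∈ range n | x ≤ ((z : ℕ) : ℝ) ∧ ((z : ℕ) : ℝ) < y} : ℝ) - (y - x)| < 1 := by
  have hset :
      {z ∈ range n | x ≤ ((z : ℕ) : ℝ) ∧ ((z : ℕ) : ℝ) < y} = Ico ⌈x⌉₊ ⌈y⌉₊ := by
    ext z
    simp only [mem_filter, mem_range, mem_Ico, Nat.ceil_le, Nat.lt_ceil]
    exact ⟨fun h => h.2, fun h => ⟨by exact_mod_cast h.2.trans_le hy, h⟩⟩
  rw [hset, Nat.card_Ico, Nat.cast_sub (Nat.ceil_mono hxy), abs_sub_lt_iff]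
  have := natCeil_lt_add_one_of_neg_one_lt hx
  have := natCeil_lt_add_one_of_neg_one_lt (hx.trans_le hxy)
  have := Nat.le_ceil x
  have := Nat.le_ceil y
  constructor <;> linarith

theorem abs_card_filter_div_eq_sub_lt {m D P ρ q s : ℕ} (hm : m = D * P) (hρ : ρ < D)
    (hs : s < q) : |(#{z ∈ range P | q * (ρ + D * z) / m = s} : ℝ) - P / q| < 1 := by
  have hD : (0 : ℝ) < D := by exact_mod_cast Nat.zero_lt_of_lt hρ
  have hq : (0 : ℝ) < q := by exact_mod_cast Nat.zero_lt_of_lt hs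
  rcases Nat.eq_zero_or_pos P with rfl | hP
  · simp
  have hm0 : 0 < m := hm ▸ Nat.mul_pos (Nat.zero_lt_of_lt hρ) hP
  have key : ∀ A z : ℕ, (A : ℝ) * P / q - ρ / D ≤ z ↔ A * m ≤ q * (ρ + D * z) := by
    intro A z
    have hfrac : (A : ℝ) * P / q - ρ / D = (A * (D * P) - q * ρ) / (q * D) := by field_simp
    rw [← Nat.cast_le (α := ℝ), hm, hfrac, div_le_iff₀ (by positivity)]
    push_cast
    constructor <;> intro h <;> linarith
  have hcond : ∀ z, q * (ρ + D * z) / m = s ↔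
      (s : ℝ) * P / q - ρ / D ≤ z ∧ (z : ℝ) < ((s + 1 : ℕ) : ℝ) * P / q - ρ / D := by
    intro z
    rw [key, ← not_le, key, not_le, ← Nat.le_div_iff_mul_le hm0, ← Nat.div_lt_iff_lt_mul hm0]
    omega
  simp_rw [hcond]
  have hs1 : ((s + 1 : ℕ) : ℝ) ≤ q := by exact_mod_cast hs
  convert abs_card_filter_range_sub_lt (n := P) ?_ ?_ ?_ using 2
  · push_cast
    ring
  · have : (ρ : ℝ) / D < 1 := (div_lt_one hD).2 (by exact_mod_cast hρ)
    have : 0 ≤ (s : ℝ) * P / q := by positivity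
    linarith
  · gcongr
    linarith
  · have : ((s + 1 : ℕ) : ℝ) * P / q ≤ P := by
      rw [div_le_iff₀ hq, mul_comm]
      gcongr
    have : 0 ≤ (ρ : ℝ) / D := by positivity
    push_cast at *
    linarith

theorem sum_range_mul_eq_sum_sum {M : Type*} [AddCommMonoid M] (F : ℕ → M) (E P : ℕ) :
    ∑ n ∈ range (E * P), F n = ∑ u ∈ range E, ∑ t ∈ range P, F (u + E * t) := by
  induction P with
  | zero => simp
  | succ P ih =>
    rw [mul_add_one, sum_range_add, ih]
    simp only [sum_range_succ, sum_add_distrib, add_comm (E * P)]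

theorem abs_card_filter_range_mul_div_sub_le {g M D P E c q s : ℕ}
    (h : IsCongruenceOrbit g M D P E) (hM : 0 < M) (hc : c.Coprime M) (hg : g.Coprime M)
    (hs : s < q) :
    |(#{n ∈ range (E * P) | q * (c * g ^ n % M) / M = s} : ℝ) / (E * P : ℕ) - 1 / q|
      ≤ 1 / P := by
  obtain ⟨hD, hP⟩ := h.factors_pos hM
  have hE := h.pos
  have hEP : (0 : ℝ) < (E * P : ℕ) := by exact_mod_cast Nat.mul_pos hE hP
  have hsplit : #{n ∈ range (E * P) | q * (c * g ^ n % M) / M = s} =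
      ∑ u ∈ range E, #{z ∈ range P | q * (c * g ^ u % D + D * z) / M = s} := by
    simp only [card_filter]
    rw [sum_range_mul_eq_sum_sum]
    refine sum_congr rfl fun u _ => ?_
    rw [← card_filter, ← card_filter, ← card_filter_range_mul_pow_mod h hD
      (Nat.Coprime.mul_left hc (Nat.Coprime.pow_left u hg)) (fun x => q * x / M = s)]
    simp only [pow_add, pow_mul, mul_assoc]
  calc |(#{n ∈ range (E * P) | q * (c * g ^ n % M) / M = s} : ℝ) / (E * P : ℕ) - 1 / q|
      = |∑ u ∈ range E,
            ((#{z ∈ range P | q * (c * g ^ u % D + D * z) / M = s} : ℝ) - P / q)|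
          / (E * P : ℕ) := by
        rw [← abs_of_pos hEP, ← abs_div, abs_of_pos hEP, sum_sub_distrib, sum_const, card_range,
          nsmul_eq_mul, hsplit]
        push_cast
        congr 1
        field_simp
    _ ≤ ∑ u ∈ range E, (1 : ℝ) / (E * P : ℕ) := by
        rw [← sum_div]
        gcongr
        refine (abs_sum_le_sum_abs _ _).trans (sum_le_sum fun u _ => ?_)
        exact (abs_card_filter_div_eq_sub_lt h.eq_mul (Nat.mod_lt _ hD) hs).le
    _ = 1 / P := by
        rw [sum_const, card_range, nsmul_eq_mul]
        push_cast
        field_simp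

theorem padicValNat_pow_sub_one {p x n : ℕ} [hp : Fact p.Prime] (hx1 : 1 < x)
    (hx : p ^ 2 ∣ x - 1) (hn : n ≠ 0) :
    padicValNat p (x ^ n - 1) = padicValNat p (x - 1) + padicValNat p n := by
  have hp1 : p ∣ x - 1 := (dvd_pow_self p two_ne_zero).trans hx
  have hpx : ¬p ∣ x := fun h => hp.out.not_dvd_one (by
    simpa [Nat.sub_sub_self hx1.le] using Nat.dvd_sub h hp1)
  rw [← Nat.cast_inj (R := ℕ∞), Nat.cast_add,
    padicValNat_eq_emultiplicity (Nat.sub_ne_zero_of_lt (Nat.one_lt_pow hn hx1)),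
    padicValNat_eq_emultiplicity (Nat.sub_ne_zero_of_lt hx1), padicValNat_eq_emultiplicity hn]
  rcases hp.out.eq_two_or_odd' with rfl | hodd
  · have h4 : (4 : ℤ) ∣ (x : ℤ) - 1 := by
      have := Int.natCast_dvd_natCast.2 hx
      push_cast [Nat.cast_sub hx1.le] at this
      exact this
    have h2 := Int.two_pow_sub_pow' n h4 (by exact_mod_cast hpx)
    rw [one_pow] at h2
    iterate 3 rw [← Int.natCast_emultiplicity]
    push_cast [Nat.cast_sub hx1.le, Nat.cast_sub (Nat.one_le_pow n x (by omega))]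
    exact h2
  · simpa only [one_pow] using Nat.emultiplicity_pow_sub_pow hp.out hodd hp1 hpx n

theorem padicValNat_pow_pow_sub_one {p r y : ℕ} [Fact p.Prime] (hy1 : 1 < y)
    (hy : p ^ 2 ∣ y - 1) (hpr : ¬p ∣ r) (k : ℕ) {t : ℕ} (ht : t ≠ 0) :
    padicValNat p ((y ^ r ^ k) ^ t - 1) = padicValNat p (y - 1) + padicValNat p t := by
  have hr0 : r ≠ 0 := by
    rintro rfl
    exact hpr (dvd_zero p)
  rw [← pow_mul, padicValNat_pow_sub_one hy1 hy (by positivity),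
    padicValNat.mul (by positivity) ht, padicValNat.pow, padicValNat.eq_zero_of_not_dvd hpr,
    mul_zero, zero_add]

theorem pow_dvd_pow_pow_sub_one {r y : ℕ} (hy : 1 ≤ y) (hr : r ∣ y - 1) (k t : ℕ) :
    r ^ k ∣ (y ^ r ^ k) ^ t - 1 := by
  have hyr : (r : ℤ) ∣ (y : ℤ) - 1 := by
    have := Int.natCast_dvd_natCast.2 hr
    push_cast [Nat.cast_sub hy] at this
    exact this
  have hlift : r ^ (k + 1) ∣ y ^ r ^ k - 1 := by
    have h := dvd_sub_pow_of_dvd_sub hyr k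
    rw [one_pow] at h
    rw [← Int.natCast_dvd_natCast, Nat.cast_sub (Nat.one_le_pow _ _ hy)]
    push_cast
    exact h
  exact (pow_dvd_pow r k.le_succ).trans (hlift.trans (Nat.sub_one_dvd_pow_sub_one _ _))

theorem isCongruenceOrbit_pow_pow {p r y : ℕ} [hp : Fact p.Prime] (hy1 : 1 < y)
    (hy : p ^ 2 * r ∣ y - 1) (hpr : ¬p ∣ r) (a k : ℕ) :
    IsCongruenceOrbit y (p ^ a * r ^ k) (p ^ min a (padicValNat p (y - 1)) * r ^ k)
      (p ^ (a - padicValNat p (y - 1))) (r ^ k) := by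
  set β := padicValNat p (y - 1)
  have hr0 : r ≠ 0 := by
    rintro rfl
    exact hpr (dvd_zero p)
  have hp2 : p ^ 2 ∣ y - 1 := (dvd_mul_right _ _).trans hy
  have hr : ∀ t, r ^ k ∣ (y ^ r ^ k) ^ t - 1 :=
    pow_dvd_pow_pow_sub_one hy1.le ((dvd_mul_left _ _).trans hy) k
  have hne : ∀ t, t ≠ 0 → (y ^ r ^ k) ^ t - 1 ≠ 0 := fun t ht => by
    rw [← pow_mul]
    exact Nat.sub_ne_zero_of_lt (Nat.one_lt_pow (by positivity) hy1)
  have hcop : ∀ b, (p ^ b).Coprime (r ^ k) := fun b =>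
    Nat.Coprime.pow _ _ ((Nat.Prime.coprime_iff_not_dvd hp.out).2 hpr)
  have hdvd : ∀ b t, t ≠ 0 →
      (p ^ b * r ^ k ∣ (y ^ r ^ k) ^ t - 1 ↔ b ≤ β + padicValNat p t) :=
    fun b t ht => by
      rw [← padicValNat_pow_pow_sub_one hy1 hp2 hpr k ht, ← padicValNat_dvd_iff_le (hne t ht)]
      exact ⟨(dvd_mul_right _ _).trans, fun h => (hcop b).mul_dvd_of_dvd_of_dvd h (hr t)⟩
  refine ⟨?_, by positivity, ?_, fun t => ?_⟩
  · rw [mul_right_comm, ← pow_add]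
    congr 2
    omega
  · refine ((Nat.modEq_iff_dvd' (Nat.one_le_pow _ _ (by omega))).2 ?_).symm
    simpa using (hdvd _ 1 one_ne_zero).2 (by simp)
  · rw [Nat.ModEq.comm, Nat.modEq_iff_dvd' (Nat.one_le_pow _ _ (by positivity))]
    rcases eq_or_ne t 0 with rfl | ht
    · simp
    rw [hdvd _ t ht, padicValNat_dvd_iff_le ht]
    omega

theorem exists_isCongruenceOrbit {g m p : ℕ} (hg : 1 < g) (hp : p.Prime) (hpm : p ∣ m)
    (hmg : m.Coprime g) :
    ∃ D P E : ℕ → ℕ, Tendsto P atTop atTop ∧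
      ∀ k, IsCongruenceOrbit g (m ^ k) (D k) (P k) (E k) := by
  have := Fact.mk hp
  have hm0 : m ≠ 0 := by
    rintro rfl
    exact hg.ne' (Nat.coprime_zero_left _ |>.1 hmg)
  set α := m.factorization p
  set r := m / p ^ α
  have hmr : m = p ^ α * r := (Nat.ordProj_mul_ordCompl_eq_self m p).symm
  have hpr : ¬p ∣ r := Nat.not_dvd_ordCompl hp hm0
  have hr0 : 0 < r := Nat.pos_of_ne_zero fun h => hm0 (by rw [hmr, h, mul_zero])
  have hα : 0 < α := hp.factorization_pos_of_dvd hm0 hpm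
  have hgpr : (p ^ 2 * r).Coprime g :=
    Nat.Coprime.mul_left (Nat.Coprime.pow_left 2 (Nat.Coprime.coprime_dvd_left hpm hmg))
      (Nat.Coprime.coprime_dvd_left ⟨p ^ α, by rw [hmr, mul_comm]⟩ hmg)
  -- `g ^ e ≡ 1 mod p ^ 2 * r` by Euler; then `E k = e * r ^ k` makes `g ^ E k ≡ 1 mod r ^ k`
  -- while the `p`-adic valuation of `g ^ E k - 1` stays `β`, independent of `k`.
  set e := Nat.totient (p ^ 2 * r)
  have he : 0 < e := Nat.totient_pos.2 (Nat.mul_pos (pow_pos hp.pos 2) hr0)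
  have hy1 : 1 < g ^ e := Nat.one_lt_pow he.ne' hg
  have hy : p ^ 2 * r ∣ g ^ e - 1 :=
    (Nat.modEq_iff_dvd' hy1.le).1 (Nat.ModEq.pow_totient hgpr.symm).symm
  set β := padicValNat p (g ^ e - 1)
  refine ⟨fun k => p ^ min (α * k) β * r ^ k, fun k => p ^ (α * k - β), fun k => e * r ^ k,
    ?_, fun k => ?_⟩
  · refine (tendsto_pow_atTop_atTop_of_one_lt hp.one_lt).comp
      (tendsto_atTop_atTop.2 fun n => ⟨n + β, fun k hk => ?_⟩)
    have := Nat.le_mul_of_pos_left k hα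
    omega
  · rw [hmr, mul_pow, ← pow_mul]
    exact (isCongruenceOrbit_pow_pow hy1 hy hpr (α * k) k).of_pow he

theorem tendsto_card_filter_Icc_mul_pow_div_mod {x g M Q i₀ D P E : ℕ} (j s : ℕ) (hg : 0 < g)
    (hM : 0 < M) (hQ : Q ∣ g ^ i₀) (hQ0 : 0 < Q) (h : IsCongruenceOrbit g M D P E) :
    Tendsto (fun N : ℕ => (#{i ∈ Icc j N | x * g ^ i / (M * Q) % g ^ j = s} : ℝ) / N) atTop
      (𝓝 ((#{n ∈ range (E * P) | x * g ^ (i₀ + j + n) / (M * Q) % g ^ j = s} : ℝ)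
        / (E * P : ℕ))) := by
  refine tendsto_card_filter_Icc_div_of_periodic _ j
    (Nat.mul_pos h.pos (h.factors_pos hM).2) fun i hi => ?_
  obtain ⟨n, rfl⟩ : ∃ n, i = i₀ + j + n := ⟨i - (i₀ + j), by omega⟩
  have hper : x * g ^ i₀ / Q * g ^ (n + E * P) ≡ x * g ^ i₀ / Q * g ^ n [MOD M] := by
    simpa [pow_add, ← mul_assoc] using h.pow_period_modEq_one.mul_left (x * g ^ i₀ / Q * g ^ n)
  rw [add_assoc (i₀ + j), mul_pow_add_div_mul_mod_pow _ _ hg hM hQ hQ0,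
    mul_pow_add_div_mul_mod_pow _ _ hg hM hQ hQ0, hper]

theorem abs_card_filter_range_mul_pow_div_mod_sub_le {x g M Q i₀ D P E j s : ℕ} (hg : 0 < g)
    (hM : 0 < M) (hQ : Q ∣ g ^ i₀) (hQ0 : 0 < Q) (h : IsCongruenceOrbit g M D P E)
    (hx : x.Coprime M) (hgM : g.Coprime M) (hs : s < g ^ j) :
    |(#{n ∈ range (E * P) | x * g ^ (i₀ + j + n) / (M * Q) % g ^ j = s} : ℝ) / (E * P : ℕ)
      - 1 / (g : ℝ) ^ j| ≤ 1 / P := by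
  have hc : (x * g ^ i₀ / Q).Coprime M :=
    Nat.Coprime.coprime_dvd_left (Nat.div_dvd_of_dvd (hQ.mul_left x))
      (hx.mul_left (hgM.pow_left i₀))
  simp_rw [mul_pow_add_div_mul_mod_pow _ _ hg hM hQ hQ0]
  exact_mod_cast abs_card_filter_range_mul_div_sub_le h hM hc hgM hs

theorem density_tendsto_full_complexity_general (g b : ℕ) (hg : 2 ≤ g) (hb : 1 < b)
    (hp : ∃ p : ℕ, p.Prime ∧ p ∣ b ∧ ¬p ∣ g)
    (a : ℕ → ℕ) (ha : ∀ k : ℕ, 1 ≤ k → 0 < a k ∧ Nat.gcd (a k) b = 1)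
    (j : ℕ) :
    ∀ s : ℕ, s < g ^ j →
      ∃ d : ℕ → ℝ,
        (∀ k : ℕ, 1 ≤ k →
          Filter.Tendsto
            (fun N : ℕ =>
              (((Finset.Icc j N).filter
                  (fun i => (a k * g ^ i / b ^ k) % g ^ j = s)).card : ℝ) / (N : ℝ))
            Filter.atTop (nhds (d k))) ∧
        Filter.Tendsto d Filter.atTop (nhds (1 / (g : ℝ) ^ j)) := by
  intro s hs
  obtain ⟨p, hp, hpb, hpg⟩ := hp
  obtain ⟨m, Q, hbmQ, hQ, hmg⟩ :=
    exists_eq_mul_coprime_dvd_pow (by omega : b ≠ 0) (by omega : g ≠ 0)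
  obtain ⟨hm0, hQ0⟩ := CanonicallyOrderedAdd.mul_pos.1 (hbmQ ▸ (by omega : 0 < b))
  have hpm : p ∣ m := (hp.dvd_mul.1 (hbmQ ▸ hpb)).resolve_right fun hpQ =>
    hpg (hp.dvd_of_dvd_pow (hpQ.trans hQ))
  obtain ⟨D, P, E, hP, horbit⟩ := exists_isCongruenceOrbit (by omega) hp hpm hmg
  have hbk : ∀ k, b ^ k = m ^ k * Q ^ k := fun k => by rw [hbmQ, mul_pow]
  have hQk : ∀ k, Q ^ k ∣ g ^ (b * k) := fun k => pow_mul g b k ▸ pow_dvd_pow_of_dvd hQ k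
  refine ⟨fun k =>
    (#{n ∈ range (E k * P k) | a k * g ^ (b * k + j + n) / b ^ k % g ^ j = s} : ℝ)
      / (E k * P k : ℕ), fun k _ => ?_, ?_⟩
  · simp_rw [hbk k]
    exact tendsto_card_filter_Icc_mul_pow_div_mod j s (by omega) (pow_pos hm0 k) (hQk k)
      (pow_pos hQ0 k) (horbit k)
  have hlim : Tendsto (fun k => 1 / (P k : ℝ)) atTop (𝓝 0) := by
    simp only [one_div]
    exact tendsto_inv_atTop_zero.comp ((tendsto_natCast_atTop_atTop (R := ℝ)).comp hP)
  refine tendsto_iff_norm_sub_tendsto_zero.2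
    (squeeze_zero' (Eventually.of_forall fun _ => norm_nonneg _) ?_ hlim)
  filter_upwards [eventually_ge_atTop 1] with k hk
  simp_rw [hbk k, Real.norm_eq_abs]
  exact abs_card_filter_range_mul_pow_div_mod_sub_le (by omega) (pow_pos hm0 k) (hQk k)
    (pow_pos hQ0 k) (horbit k)
    ((Nat.Coprime.coprime_dvd_right ⟨Q, hbmQ⟩ (ha k hk).2).pow_right k) (hmg.symm.pow_right k) hs

/-- Let `b > 1` have at least one prime factor not dividing `g ≥ 2`, and
let `(a_k)` be a sequence of positive integers coprime to `b`. For each `j`-word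
`s < g^j`, the limiting relative frequency
`d_k(s) = lim_{N→∞} (1/N)·#{i : j ≤ i ≤ N, ⌊a_k·g^i/b^k⌋ mod g^j = s}` exists for
every `k ≥ 1`, and `d_k(s) → 1/g^j` as `k → ∞`. -/
theorem density_tendsto_full_complexity (g b : ℕ) (hg : 2 ≤ g) (hb : 1 < b)
    (hp : ∃ p : ℕ, p.Prime ∧ p ∣ b ∧ ¬p ∣ g)
    (a : ℕ → ℕ) (ha : ∀ k : ℕ, 1 ≤ k → 0 < a k ∧ Nat.gcd (a k) b = 1)
    (j : ℕ) (hj : 1 ≤ j) :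
    ∀ s : ℕ, s < g ^ j →
      ∃ d : ℕ → ℝ,
        (∀ k : ℕ, 1 ≤ k →
          Filter.Tendsto
            (fun N : ℕ =>
              (((Finset.Icc j N).filter
                  (fun i => (a k * g ^ i / b ^ k) % g ^ j = s)).card : ℝ) / (N : ℝ))
            Filter.atTop (nhds (d k))) ∧
        Filter.Tendsto d Filter.atTop (nhds (1 / (g : ℝ) ^ j)) :=
  density_tendsto_full_complexity_general g b hg hb hp a ha j
end
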